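/- Fix integers n ≥ 0 and k ≥ 1. Let ω_i^{(r)} (0 ≤ i ≤ n, 1 ≤ r ≤ k) be any real numbers with partial sums S_m^{(r)} = Σ_{i=0}^{m−1} ω_i^{(r)}, and let B^{(r)} : [0, n+1] → ℝ, 1 ≤ r ≤ k, be any continuous functions with B^{(r)}_0 = 0. Define T(n,k) = max over directed lattice paths from (0,1) to (n,k) of the sum of the ω's along the path, and L_B(n,k) = sup over 0 = u_0 ≤ u_1 ≤ … ≤ u_k = n of Σ_{r=1}^k (B^{(r)}_{u_r} − B^{(r)}_{u_{r−1}}). Then |T(n,k) − L_B(n,k)| ≤ 2 Σ_{r=1}^{k} [ max_{1 ≤ m ≤ n+1} |S_m^{(r)} − B^{(r)}_m| + sup{ |B^{(r)}_s − B^{(r)}_t| : 0 ≤ s, t ≤ n+1, |s − t| < 2 } ]. -/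

import Mathlib

open MeasureTheory ProbabilityTheory Filter Set

noncomputable section

/-- A directed lattice path in `ℤ₊²` from `(0,1)` to `(n,k)`, encoded as a function on
step indices; it has `n + k` vertices, and each step increases one coordinate by `1`. -/
def IsDirPath (n k : ℕ) (z : ℕ → ℕ × ℕ) : Prop :=
  z 0 = (0, 1) ∧ z (n + k - 1) = (n, k) ∧
    ∀ j, j < n + k - 1 →
      z (j + 1) = ((z j).1 + 1, (z j).2) ∨ z (j + 1) = ((z j).1, (z j).2 + 1)

/-- The last-passage time `T(n,k)`: the maximum over directed paths from `(0,1)` to `(n,k)`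
of the sum of the weights `w i r` over the points `(i,r)` of the path. -/
def lppT (w : ℕ → ℕ → ℝ) (n k : ℕ) : ℝ :=
  sSup { x | ∃ z : ℕ → ℕ × ℕ, IsDirPath n k z ∧
    x = ∑ j ∈ Finset.range (n + k), w (z j).1 (z j).2 }

/-- The Brownian (continuous) last-passage time `L(t,k)` built from the paths
`B r : ℝ → ℝ`, `1 ≤ r ≤ k`. -/
def brownianLPP (B : ℕ → ℝ → ℝ) (t : ℝ) (k : ℕ) : ℝ :=
  sSup { x | ∃ u : ℕ → ℝ, u 0 = 0 ∧ u k = t ∧ (∀ r, r < k → u r ≤ u (r + 1)) ∧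
    x = ∑ r ∈ Finset.range k, (B (r + 1) (u (r + 1)) - B (r + 1) (u r)) }

/-- `B` is a standard Brownian motion on the time interval `[0, T]` under the measure `P`:
it starts at `0`, has continuous sample paths on `[0,T]`, Gaussian increments of the right
variance, and independent increments. -/
def IsStandardBMOn {Ω : Type*} [MeasurableSpace Ω] (P : Measure Ω) (B : Ω → ℝ → ℝ)
    (T : ℝ) : Prop :=
  (∀ ω, B ω 0 = 0) ∧
  (∀ ω, ContinuousOn (B ω) (Icc 0 T)) ∧
  (∀ s t : ℝ, 0 ≤ s → s ≤ t → t ≤ T →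
    Measure.map (fun ω => B ω t - B ω s) P = gaussianReal 0 (Real.toNNReal (t - s))) ∧
  (∀ (m : ℕ) (u : ℕ → ℝ), Monotone u → (∀ i, u i ∈ Icc (0 : ℝ) T) →
    iIndepFun
      (fun (i : Fin m) ω => B ω (u (i.1 + 1)) - B ω (u i.1)) P)

/-- `B` is a standard Brownian motion on `[0, ∞)` under the measure `P`. -/
def IsStandardBM {Ω : Type*} [MeasurableSpace Ω] (P : Measure Ω) (B : Ω → ℝ → ℝ) : Prop :=
  (∀ ω, B ω 0 = 0) ∧
  (∀ ω, Continuous (B ω)) ∧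
  (∀ s t : ℝ, 0 ≤ s → s ≤ t →
    Measure.map (fun ω => B ω t - B ω s) P = gaussianReal 0 (Real.toNNReal (t - s))) ∧
  (∀ (m : ℕ) (u : ℕ → ℝ), Monotone u → (∀ i, 0 ≤ u i) →
    iIndepFun
      (fun (i : Fin m) ω => B ω (u (i.1 + 1)) - B ω (u i.1)) P)

/-- The doubly-indexed family `W i r`, `i ≥ 0`, `r ≥ 1`, is i.i.d. with common law `ν`
under `P`. -/
def IsIIDArray {Ω : Type*} [MeasurableSpace Ω] (P : Measure Ω) (W : ℕ → ℕ → Ω → ℝ)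
    (ν : Measure ℝ) : Prop :=
  (∀ i r, Measure.map (W i r) P = ν) ∧
  iIndepFun (fun p : ℕ × ℕ => W p.1 p.2) P

private def pS (w : ℕ → ℕ → ℝ) (r m : ℕ) : ℝ := ∑ i ∈ Finset.range m, w i r

private lemma chain_mono {α : Type*} [Preorder α] (a : ℕ → α) (k : ℕ)
    (h : ∀ r, r < k → a r ≤ a (r + 1)) : ∀ i j, i ≤ j → j ≤ k → a i ≤ a j := by
  intro i j
  induction j with
  | zero => intro hij _; have : i = 0 := Nat.le_zero.mp hij; simp [this]
  | succ m ih =>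
    intro hij hjk
    rcases Nat.lt_or_ge i (m + 1) with h1 | h2
    · exact le_trans (ih (by omega) (by omega)) (h m (by omega))
    · have : i = m + 1 := by omega
      exact le_of_eq (by rw [this])

private lemma sum_blocks (w : ℕ → ℕ → ℝ) (n k : ℕ) (z : ℕ → ℕ × ℕ) (a : ℕ → ℕ)
    (ha0 : a 0 = 0) (hak : a k = n) (hmono : ∀ r, r < k → a r ≤ a (r + 1))
    (hz : ∀ r, r < k → ∀ j, a r + r ≤ j → j < a (r + 1) + (r + 1) → z j = (j - r, r + 1)) :
    ∑ j ∈ Finset.range (n + k), w (z j).1 (z j).2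
      = ∑ r ∈ Finset.range k, (pS w (r + 1) (a (r + 1) + 1) - pS w (r + 1) (a r)) := by
  have main : ∀ m, m ≤ k → ∑ j ∈ Finset.range (a m + m), w (z j).1 (z j).2
      = ∑ r ∈ Finset.range m, (pS w (r + 1) (a (r + 1) + 1) - pS w (r + 1) (a r)) := by
    intro m
    induction m with
    | zero => intro _; simp [ha0]
    | succ m ih =>
      intro hmk
      have hm : a m ≤ a (m + 1) := hmono m (by omega)
      have h1 : a m + m ≤ a (m + 1) + (m + 1) := by omega
      rw [Finset.range_eq_Ico, ← Finset.sum_Ico_consecutive _ (Nat.zero_le _) h1,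
        ← Finset.range_eq_Ico, ih (by omega), Finset.sum_range_succ]
      congr 1
      have hterm : ∀ j ∈ Finset.Ico (a m + m) (a (m + 1) + (m + 1)),
          w (z j).1 (z j).2 = w (j - m) (m + 1) := by
        intro j hj
        rw [Finset.mem_Ico] at hj
        rw [hz m (by omega) j hj.1 hj.2]
      rw [Finset.sum_congr rfl hterm]
      rw [Finset.sum_Ico_eq_sum_range]
      have hps : pS w (m + 1) (a (m + 1) + 1) - pS w (m + 1) (a m)
          = ∑ i ∈ Finset.Ico (a m) (a (m + 1) + 1), w i (m + 1) := by
        rw [Finset.sum_Ico_eq_sub _ (by omega)]; rfl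
      rw [hps, Finset.sum_Ico_eq_sum_range]
      have hlen : a (m + 1) + (m + 1) - (a m + m) = a (m + 1) + 1 - a m := by omega
      rw [hlen]
      apply Finset.sum_congr rfl
      intro i hi
      congr 1
      omega
  have h := main k le_rfl
  rw [hak] at h
  exact h

private lemma path_to_seq (w : ℕ → ℕ → ℝ) (n k : ℕ) (hk : 1 ≤ k) (z : ℕ → ℕ × ℕ)
    (hz : IsDirPath n k z) :
    ∃ a : ℕ → ℕ, a 0 = 0 ∧ a k = n ∧ (∀ r, r < k → a r ≤ a (r + 1)) ∧
      ∑ j ∈ Finset.range (n + k), w (z j).1 (z j).2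
        = ∑ r ∈ Finset.range k, (pS w (r + 1) (a (r + 1) + 1) - pS w (r + 1) (a r)) := by
  obtain ⟨hz0, hzend, hstep⟩ := hz
  set N := n + k - 1 with hN
  have hNk : N + 1 = n + k := by omega
  have hsum : ∀ j, j ≤ N → (z j).1 + (z j).2 = j + 1 := by
    intro j
    induction j with
    | zero => intro _; rw [hz0]
    | succ m ih =>
      intro h
      have hm := ih (by omega)
      rcases hstep m (by omega) with h' | h' <;> rw [h'] <;> simp <;> omega
  have hstep2 : ∀ j, j < N → (z j).2 ≤ (z (j + 1)).2 := by
    intro j hj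
    rcases hstep j hj with h' | h' <;> rw [h'] <;> simp
  have cmono : ∀ i j, i ≤ j → j ≤ N → (z i).2 ≤ (z j).2 :=
    chain_mono (fun j => (z j).2) N (fun r hr => hstep2 r hr)
  have hcle : ∀ j, j ≤ N → (z j).2 ≤ k := by
    intro j hj
    have := cmono j N hj le_rfl
    rw [hzend] at this
    exact this
  have hc0 : (z 0).2 = 1 := by rw [hz0]
  have hex : ∀ r : ℕ, ∃ j, r ≤ (z j).2 ∨ N < j := fun r => ⟨N + 1, Or.inr (by omega)⟩
  set f : ℕ → ℕ := fun r => Nat.find (hex r) with hf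
  have hfle : ∀ r, r ≤ k → f r ≤ N := by
    intro r hr
    apply Nat.find_le
    left
    rw [hzend]
    exact hr
  have hfc : ∀ r, 1 ≤ r → r ≤ k → (z (f r)).2 = r := by
    intro r h1 h2
    have hsp : r ≤ (z (f r)).2 ∨ N < f r := Nat.find_spec (hex r)
    have hle := hfle r h2
    have hrc : r ≤ (z (f r)).2 := by
      rcases hsp with h | h
      · exact h
      · omega
    rcases Nat.eq_zero_or_pos (f r) with h0 | h0
    · rw [h0] at hrc ⊢
      rw [hc0] at hrc ⊢
      omega
    · have hmin : ¬(r ≤ (z (f r - 1)).2 ∨ N < f r - 1) :=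
        Nat.find_min (hex r) (show f r - 1 < f r by omega)
      push_neg at hmin
      have h3 : (z (f r - 1)).2 < r := by omega
      have h4 : (z (f r - 1 + 1)).2 ≤ (z (f r - 1)).2 + 1 := by
        rcases hstep (f r - 1) (by omega) with h' | h' <;> rw [h'] <;> simp
      rw [show f r - 1 + 1 = f r by omega] at h4
      omega
  -- c j ≤ j + 1
  have hcub : ∀ j, j ≤ N → (z j).2 ≤ j + 1 := by
    intro j hj
    have := hsum j hj
    omega
  have hfge : ∀ r, 1 ≤ r → r ≤ k → r ≤ f r + 1 := by
    intro r h1 h2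
    have := hfc r h1 h2
    have := hcub (f r) (hfle r h2)
    omega
  have hfstrict : ∀ r, 1 ≤ r → r < k → f r < f (r + 1) := by
    intro r h1 h2
    by_contra hcon
    push_neg at hcon
    have := cmono (f (r + 1)) (f r) hcon (hfle r (by omega))
    rw [hfc r h1 (by omega), hfc (r + 1) (by omega) (by omega)] at this
    omega
  have hbound : ∀ r j, j < f r → (z j).2 < r ∨ N < j := by
    intro r j hj
    have : ¬(r ≤ (z j).2 ∨ N < j) := Nat.find_min (hex r) hj
    push_neg at this
    rcases Nat.lt_or_ge N j with h | h
    · exact Or.inr h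
    · exact Or.inl (by omega)
  have hf1 : f 1 = 0 := by
    have : Nat.find (hex 1) = 0 := by
      rw [Nat.find_eq_zero]
      left
      rw [hc0]
    exact this
  set a : ℕ → ℕ := fun r => if r < k then f (r + 1) - r else n with ha
  have haval : ∀ r, r < k → a r = f (r + 1) - r := by
    intro r hr
    simp only [ha]
    rw [if_pos hr]
  have hak : a k = n := by
    simp only [ha]
    rw [if_neg (lt_irrefl k)]
  have ha0 : a 0 = 0 := by
    rw [haval 0 hk, hf1]
  have hamono : ∀ r, r < k → a r ≤ a (r + 1) := by
    intro r hr
    rw [haval r hr]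
    by_cases h2 : r + 1 < k
    · rw [haval (r + 1) h2]
      have hs := hfstrict (r + 1) (by omega) (by omega)
      have := hfge (r + 1) (by omega) (by omega)
      omega
    · have hrk : r + 1 = k := by omega
      rw [hrk, hak]
      have hle := hfle k le_rfl
      have := hfge k hk le_rfl
      omega
  refine ⟨a, ha0, hak, hamono, sum_blocks w n k z a ha0 hak hamono ?_⟩
  intro r hr j hj1 hj2
  rw [haval r hr] at hj1
  have hfge1 := hfge (r + 1) (by omega) (by omega)
  have hj1' : f (r + 1) ≤ j := by omega
  have hjN : j ≤ N := by
    by_cases h2 : r + 1 < k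
    · rw [haval (r + 1) h2] at hj2
      have := hfle (r + 1 + 1) (by omega)
      have := hfge (r + 1 + 1) (by omega) (by omega)
      omega
    · have hrk : r + 1 = k := by omega
      rw [hrk, hak] at hj2
      omega
  have hclow : r + 1 ≤ (z j).2 := by
    have := cmono (f (r + 1)) j hj1' hjN
    rw [hfc (r + 1) (by omega) (by omega)] at this
    exact this
  have hchigh : (z j).2 ≤ r + 1 := by
    by_cases h2 : r + 1 < k
    · rw [haval (r + 1) h2] at hj2
      have hj2' : j < f (r + 1 + 1) := by
        have := hfge (r + 1 + 1) (by omega) (by omega)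
        omega
      rcases hbound (r + 1 + 1) j hj2' with h | h
      · omega
      · omega
    · have := hcle j hjN
      omega
  have hc : (z j).2 = r + 1 := le_antisymm hchigh hclow
  have hs := hsum j hjN
  have hfst : (z j).1 = j - r := by omega
  rw [← hfst, ← hc]

private lemma seq_to_path (n k : ℕ) (hk : 1 ≤ k) (a : ℕ → ℕ) (ha0 : a 0 = 0) (hak : a k = n)
    (hmono : ∀ r, r < k → a r ≤ a (r + 1)) :
    ∃ z : ℕ → ℕ × ℕ, IsDirPath n k z ∧
      ∀ w : ℕ → ℕ → ℝ, ∑ j ∈ Finset.range (n + k), w (z j).1 (z j).2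
        = ∑ r ∈ Finset.range k, (pS w (r + 1) (a (r + 1) + 1) - pS w (r + 1) (a r)) := by
  have achain : ∀ i j, i ≤ j → j ≤ k → a i ≤ a j := chain_mono a k hmono
  have hex : ∀ j : ℕ, ∃ r, j < a (r + 1) + (r + 1) := fun j => ⟨j, by omega⟩
  set ρ : ℕ → ℕ := fun j => Nat.find (hex j) with hρ
  have hρspec : ∀ j, j < a (ρ j + 1) + (ρ j + 1) := fun j => Nat.find_spec (hex j)
  have hρmin : ∀ j r, r < ρ j → ¬ j < a (r + 1) + (r + 1) := fun j r hr => Nat.find_min (hex j) hr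
  have hρle : ∀ j r, j < a (r + 1) + (r + 1) → ρ j ≤ r := fun j r h => Nat.find_le h
  have hρ_eq : ∀ r j, r < k → a r + r ≤ j → j < a (r + 1) + (r + 1) → ρ j = r := by
    intro r j hrk h1 h2
    have hle : ρ j ≤ r := hρle j r h2
    rcases Nat.lt_or_ge (ρ j) r with hlt | hge
    · exfalso
      have hmin := hρmin j (ρ j) -- unused
      have h3 := hρspec j
      have h4 : a (ρ j + 1) ≤ a r := achain (ρ j + 1) r (by omega) (by omega)
      omega
    · omega
  have hblock : ∀ j, j < n + k → a (ρ j) + ρ j ≤ j ∧ j < a (ρ j + 1) + (ρ j + 1) ∧ ρ j < k := by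
    intro j hj
    have hspec := hρspec j
    have hk' : ρ j ≤ k - 1 := by
      apply hρle
      rw [show k - 1 + 1 = k by omega, hak]
      omega
    have hlow : a (ρ j) + ρ j ≤ j := by
      rcases Nat.eq_zero_or_pos (ρ j) with h0 | h0
      · rw [h0, ha0]
        omega
      · have hm := hρmin j (ρ j - 1) (by omega)
        rw [show ρ j - 1 + 1 = ρ j by omega] at hm
        omega
    exact ⟨hlow, hspec, by omega⟩
  refine ⟨fun j => (j - ρ j, ρ j + 1), ⟨?_, ?_, ?_⟩, ?_⟩
  · have h0 : ρ 0 = 0 := hρ_eq 0 0 hk (by omega) (by omega)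
    simp [h0]
  · beta_reduce
    have hj : n + k - 1 < n + k := by omega
    have h1 : ρ (n + k - 1) = k - 1 := by
      apply hρ_eq (k - 1) (n + k - 1) (by omega)
      · have : a (k - 1) ≤ n := by
          have := achain (k - 1) k (by omega) le_rfl
          omega
        omega
      · rw [show k - 1 + 1 = k by omega, hak]
        omega
    rw [h1]
    have : n + k - 1 - (k - 1) = n := by omega
    rw [this, show k - 1 + 1 = k by omega]
  · intro j hj
    beta_reduce
    obtain ⟨hl, hu, hrk⟩ := hblock j (by omega)
    rcases Nat.lt_or_ge (j + 1) (a (ρ j + 1) + (ρ j + 1)) with hcase | hcase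
    · left
      have : ρ (j + 1) = ρ j := hρ_eq (ρ j) (j + 1) hrk (by omega) hcase
      rw [this]
      simp only [Prod.mk.injEq]
      constructor
      · omega
      · trivial
    · right
      have hj1 : j + 1 = a (ρ j + 1) + (ρ j + 1) := by omega
      have hrk2 : ρ j + 1 < k := by
        by_contra hcon
        have : ρ j + 1 = k := by omega
        rw [this, hak] at hj1
        omega
      have hmono2 := hmono (ρ j + 1) hrk2
      have h2 : ρ (j + 1) = ρ j + 1 := by
        apply hρ_eq (ρ j + 1) (j + 1) hrk2 (by omega)
        omega
      rw [h2]
      simp only [Prod.mk.injEq]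
      constructor
      · omega
      · trivial
  · intro w
    apply sum_blocks w n k _ a ha0 hak hmono
    intro r hr j h1 h2
    beta_reduce
    have := hρ_eq r j hr h1 h2
    rw [this]

private lemma main_thm
    (n k : ℕ) (hk : 1 ≤ k) (w : ℕ → ℕ → ℝ) (B : ℕ → ℝ → ℝ)
    (hB0 : ∀ r, 1 ≤ r → r ≤ k → B r 0 = 0)
    (hBcont : ∀ r, 1 ≤ r → r ≤ k → ContinuousOn (B r) (Icc 0 ((n : ℝ) + 1))) :
    |lppT w n k - brownianLPP B n k| ≤
      2 * ∑ r ∈ Finset.Icc 1 k,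
        (sSup {y | ∃ m : ℕ, 1 ≤ m ∧ m ≤ n + 1 ∧
            y = |(∑ i ∈ Finset.range m, w i r) - B r m|} +
         sSup {y | ∃ s t : ℝ, s ∈ Icc (0 : ℝ) ((n : ℝ) + 1) ∧ t ∈ Icc (0 : ℝ) ((n : ℝ) + 1) ∧
            |s - t| < 2 ∧ y = |B r s - B r t|}) := by
  classical
  set A : ℕ → ℝ := fun r => sSup {y | ∃ m : ℕ, 1 ≤ m ∧ m ≤ n + 1 ∧
      y = |(∑ i ∈ Finset.range m, w i r) - B r m|} with hAdef
  set O : ℕ → ℝ := fun r => sSup {y | ∃ s t : ℝ, s ∈ Icc (0 : ℝ) ((n : ℝ) + 1) ∧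
      t ∈ Icc (0 : ℝ) ((n : ℝ) + 1) ∧ |s - t| < 2 ∧ y = |B r s - B r t|} with hOdef
  have hAbdd : ∀ r, BddAbove {y | ∃ m : ℕ, 1 ≤ m ∧ m ≤ n + 1 ∧
      y = |(∑ i ∈ Finset.range m, w i r) - B r m|} := by
    intro r
    have heq : {y | ∃ m : ℕ, 1 ≤ m ∧ m ≤ n + 1 ∧ y = |(∑ i ∈ Finset.range m, w i r) - B r m|}
        = (fun m : ℕ => |(∑ i ∈ Finset.range m, w i r) - B r m|) '' (Set.Icc 1 (n + 1)) := by
      ext y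
      simp only [Set.mem_image, Set.mem_Icc, Set.mem_setOf_eq]
      constructor
      · rintro ⟨m, h1, h2, h3⟩; exact ⟨m, ⟨h1, h2⟩, h3.symm⟩
      · rintro ⟨m, ⟨h1, h2⟩, h3⟩; exact ⟨m, h1, h2, h3.symm⟩
    rw [heq]
    exact ((Set.finite_Icc 1 (n + 1)).image _).bddAbove
  have hA_mem : ∀ r m, 1 ≤ m → m ≤ n + 1 →
      |(∑ i ∈ Finset.range m, w i r) - B r m| ≤ A r :=
    fun r m h1 h2 => le_csSup (hAbdd r) ⟨m, h1, h2, rfl⟩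
  have hA_nonneg : ∀ r, 0 ≤ A r :=
    fun r => le_trans (abs_nonneg _) (hA_mem r 1 le_rfl (by omega))
  have hObdd : ∀ r, 1 ≤ r → r ≤ k → BddAbove {y | ∃ s t : ℝ, s ∈ Icc (0:ℝ) ((n:ℝ)+1) ∧
      t ∈ Icc (0:ℝ) ((n:ℝ)+1) ∧ |s - t| < 2 ∧ y = |B r s - B r t|} := by
    intro r h1 h2
    obtain ⟨C, hC⟩ := isCompact_Icc.exists_bound_of_continuousOn (hBcont r h1 h2)
    refine ⟨C + C, ?_⟩
    rintro y ⟨s, t, hs, ht, _, rfl⟩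
    have h3 := hC s hs
    have h4 := hC t ht
    rw [Real.norm_eq_abs] at h3 h4
    have e1 := le_abs_self (B r s)
    have e2 := neg_abs_le (B r t)
    have := abs_sub_abs_le_abs_sub (B r s) (B r t)
    calc |B r s - B r t| ≤ |B r s| + |B r t| := abs_sub (B r s) (B r t)
      _ ≤ C + C := by linarith
  have hO_mem : ∀ r, 1 ≤ r → r ≤ k → ∀ s t : ℝ, s ∈ Icc (0:ℝ) ((n:ℝ)+1) →
      t ∈ Icc (0:ℝ) ((n:ℝ)+1) → |s - t| < 2 → |B r s - B r t| ≤ O r :=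
    fun r h1 h2 s t hs ht hst => le_csSup (hObdd r h1 h2) ⟨s, t, hs, ht, hst, rfl⟩
  have hO_nonneg : ∀ r, 1 ≤ r → r ≤ k → 0 ≤ O r := by
    intro r h1 h2
    have h0 : (0:ℝ) ∈ Icc (0:ℝ) ((n:ℝ)+1) := Set.mem_Icc.mpr ⟨le_rfl, by positivity⟩
    have := hO_mem r h1 h2 0 0 h0 h0 (by norm_num)
    simpa using this
  set Tset : Set ℝ := {x | ∃ z : ℕ → ℕ × ℕ, IsDirPath n k z ∧
      x = ∑ j ∈ Finset.range (n + k), w (z j).1 (z j).2} with hTsetdef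
  set Lset : Set ℝ := {x | ∃ u : ℕ → ℝ, u 0 = 0 ∧ u k = (n:ℝ) ∧ (∀ r, r < k → u r ≤ u (r + 1)) ∧
      x = ∑ r ∈ Finset.range k, (B (r + 1) (u (r + 1)) - B (r + 1) (u r))} with hLsetdef
  have hT : lppT w n k = sSup Tset := rfl
  have hL : brownianLPP B n k = sSup Lset := rfl
  have hTne : Tset.Nonempty := by
    obtain ⟨z, hzpath, hzsum⟩ := seq_to_path n k hk (fun r => if r = 0 then 0 else n)
      (by simp) (by simp [show k ≠ 0 by omega])
      (by intro r hr; by_cases h : r = 0 <;> simp [h])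
    exact ⟨_, z, hzpath, rfl⟩
  have hTbdd : BddAbove Tset := by
    refine ⟨∑ r ∈ Finset.range k, 2 * (∑ i ∈ Finset.range (n + 1), |w i (r + 1)|), ?_⟩
    rintro x ⟨z, hzp, rfl⟩
    obtain ⟨a, ha0, hak, hamono, hsum⟩ := path_to_seq w n k hk z hzp
    rw [hsum]
    apply Finset.sum_le_sum
    intro r hr
    rw [Finset.mem_range] at hr
    have hach := chain_mono a k hamono
    have h1 : a (r + 1) ≤ n := by have := hach (r + 1) k (by omega) le_rfl; omega
    have h2 : a r ≤ n := by have := hach r k (by omega) le_rfl; omega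
    have hb : ∀ m, m ≤ n + 1 → |pS w (r + 1) m| ≤ ∑ i ∈ Finset.range (n + 1), |w i (r + 1)| := by
      intro m hm
      calc |pS w (r + 1) m| ≤ ∑ i ∈ Finset.range m, |w i (r + 1)| :=
            Finset.abs_sum_le_sum_abs _ _
        _ ≤ _ := Finset.sum_le_sum_of_subset_of_nonneg
            (Finset.range_subset_range.mpr hm) (fun _ _ _ => abs_nonneg _)
    have hb1 := hb (a (r + 1) + 1) (by omega)
    have hb2 := hb (a r) (by omega)
    have e1 := le_abs_self (pS w (r + 1) (a (r + 1) + 1))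
    have e2 := neg_abs_le (pS w (r + 1) (a r))
    linarith
  have hLne : Lset.Nonempty := by
    refine ⟨_, fun r => if r = 0 then (0:ℝ) else n, by simp, by simp [show k ≠ 0 by omega], ?_, rfl⟩
    intro r hr
    by_cases h : r = 0 <;> simp [h]
  have hCex : ∀ r : ℕ, ∃ C : ℝ, 1 ≤ r → r ≤ k → ∀ x ∈ Icc (0:ℝ) ((n:ℝ) + 1), |B r x| ≤ C := by
    intro r
    by_cases h : 1 ≤ r ∧ r ≤ k
    · obtain ⟨C, hC⟩ := isCompact_Icc.exists_bound_of_continuousOn (hBcont r h.1 h.2)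
      exact ⟨C, fun _ _ x hx => by simpa [Real.norm_eq_abs] using hC x hx⟩
    · exact ⟨0, fun h1 h2 => absurd ⟨h1, h2⟩ h⟩
  choose C hC using hCex
  have hLbdd : BddAbove Lset := by
    refine ⟨∑ r ∈ Finset.range k, 2 * C (r + 1), ?_⟩
    rintro x ⟨u, hu0, huk, humono, rfl⟩
    have huch := chain_mono u k humono
    have humem : ∀ r, r ≤ k → u r ∈ Icc (0:ℝ) ((n:ℝ) + 1) := by
      intro r hrk
      have e1 := huch 0 r (by omega) hrk
      have e2 := huch r k hrk le_rfl
      rw [hu0] at e1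
      rw [huk] at e2
      exact Set.mem_Icc.mpr ⟨e1, by linarith⟩
    apply Finset.sum_le_sum
    intro r hr
    rw [Finset.mem_range] at hr
    have c1 := hC (r + 1) (by omega) (by omega) _ (humem (r + 1) (by omega))
    have c2 := hC (r + 1) (by omega) (by omega) _ (humem r (by omega))
    have e1 := le_abs_self (B (r + 1) (u (r + 1)))
    have e2 := neg_abs_le (B (r + 1) (u r))
    linarith
  have dir1 : sSup Tset ≤ (∑ r ∈ Finset.range k, 2 * (A (r + 1) + O (r + 1))) + sSup Lset := by
    apply csSup_le hTne
    rintro x ⟨z, hzp, rfl⟩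
    obtain ⟨a, ha0, hak, hamono, hsum⟩ := path_to_seq w n k hk z hzp
    rw [hsum]
    have hach := chain_mono a k hamono
    have hy : (∑ r ∈ Finset.range k, (B (r + 1) ((a (r + 1) : ℝ)) - B (r + 1) ((a r : ℝ)))) ∈ Lset := by
      refine ⟨fun r => (a r : ℝ), by simp [ha0], by simp [hak], ?_, rfl⟩
      intro r hr
      show (a r : ℝ) ≤ (a (r + 1) : ℝ)
      exact_mod_cast hamono r hr
    have hyle := le_csSup hLbdd hy
    have hterm : ∀ r ∈ Finset.range k,
        pS w (r + 1) (a (r + 1) + 1) - pS w (r + 1) (a r)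
          - (B (r + 1) ((a (r + 1) : ℝ)) - B (r + 1) ((a r : ℝ))) ≤ 2 * (A (r + 1) + O (r + 1)) := by
      intro r hr
      rw [Finset.mem_range] at hr
      have hr1 : 1 ≤ r + 1 := by omega
      have hr2 : r + 1 ≤ k := by omega
      have hb1 : a (r + 1) ≤ n := by have := hach (r + 1) k hr2 le_rfl; omega
      have hb2 : a r ≤ n := by have := hach r k (by omega) le_rfl; omega
      have h1 : |pS w (r + 1) (a (r + 1) + 1) - B (r + 1) (((a (r + 1) + 1 : ℕ)) : ℝ)| ≤ A (r + 1) :=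
        hA_mem (r + 1) (a (r + 1) + 1) (by omega) (by omega)
      have h2 : |B (r + 1) (((a (r + 1) + 1 : ℕ)) : ℝ) - B (r + 1) ((a (r + 1) : ℝ))| ≤ O (r + 1) := by
        apply hO_mem (r + 1) hr1 hr2
        · refine Set.mem_Icc.mpr ⟨by positivity, ?_⟩
          push_cast
          have : (a (r + 1) : ℝ) ≤ (n : ℝ) := by exact_mod_cast hb1
          linarith
        · refine Set.mem_Icc.mpr ⟨by positivity, ?_⟩
          have : (a (r + 1) : ℝ) ≤ (n : ℝ) := by exact_mod_cast hb1
          linarith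
        · push_cast
          rw [abs_lt]
          constructor <;> linarith
      have h3 : |pS w (r + 1) (a r) - B (r + 1) ((a r : ℝ))| ≤ A (r + 1) := by
        rcases Nat.eq_zero_or_pos (a r) with h0 | h0
        · rw [h0]
          have : pS w (r + 1) 0 = 0 := by simp [pS]
          rw [this]
          rw [show ((0:ℕ):ℝ) = (0:ℝ) by norm_num, hB0 (r + 1) hr1 hr2]
          simpa using hA_nonneg (r + 1)
        · exact hA_mem (r + 1) (a r) h0 (by omega)
      have ha1 := abs_le.mp h1
      have ha2 := abs_le.mp h2
      have ha3 := abs_le.mp h3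
      have hOn := hO_nonneg (r + 1) hr1 hr2
      have hAn := hA_nonneg (r + 1)
      linarith [ha1.1, ha1.2, ha2.1, ha2.2, ha3.1, ha3.2]
    have hsumle : ∑ r ∈ Finset.range k, (pS w (r + 1) (a (r + 1) + 1) - pS w (r + 1) (a r))
        - ∑ r ∈ Finset.range k, (B (r + 1) ((a (r + 1) : ℝ)) - B (r + 1) ((a r : ℝ)))
        ≤ ∑ r ∈ Finset.range k, 2 * (A (r + 1) + O (r + 1)) := by
      rw [← Finset.sum_sub_distrib]
      exact Finset.sum_le_sum hterm
    linarith
  have dir2 : sSup Lset ≤ (∑ r ∈ Finset.range k, 2 * (A (r + 1) + O (r + 1))) + sSup Tset := by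
    apply csSup_le hLne
    rintro x ⟨u, hu0, huk, humono, rfl⟩
    have huch := chain_mono u k humono
    have humem : ∀ r, r ≤ k → 0 ≤ u r ∧ u r ≤ (n:ℝ) := by
      intro r hrk
      have e1 := huch 0 r (by omega) hrk
      have e2 := huch r k hrk le_rfl
      rw [hu0] at e1
      rw [huk] at e2
      exact ⟨e1, e2⟩
    set a : ℕ → ℕ := fun r => ⌊u r⌋₊ with hadef
    have ha0 : a 0 = 0 := by simp [hadef, hu0]
    have hak : a k = n := by simp [hadef, huk]
    have hamono : ∀ r, r < k → a r ≤ a (r + 1) := fun r hr => Nat.floor_le_floor (humono r hr)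
    have hfl : ∀ r, r ≤ k → (a r : ℝ) ≤ u r ∧ u r < a r + 1 ∧ a r ≤ n := by
      intro r hrk
      obtain ⟨hl, hu'⟩ := humem r hrk
      refine ⟨Nat.floor_le hl, Nat.lt_floor_add_one _, ?_⟩
      have h5 : (a r : ℝ) ≤ (n : ℝ) := le_trans (Nat.floor_le hl) hu'
      exact_mod_cast h5
    obtain ⟨z, hzp, hzsum⟩ := seq_to_path n k hk a ha0 hak hamono
    have hx : (∑ r ∈ Finset.range k, (pS w (r + 1) (a (r + 1) + 1) - pS w (r + 1) (a r))) ∈ Tset :=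
      ⟨z, hzp, (hzsum w).symm⟩
    have hxle := le_csSup hTbdd hx
    have hterm : ∀ r ∈ Finset.range k,
        (B (r + 1) (u (r + 1)) - B (r + 1) (u r))
          - (pS w (r + 1) (a (r + 1) + 1) - pS w (r + 1) (a r))
          ≤ 2 * (A (r + 1) + O (r + 1)) := by
      intro r hr
      rw [Finset.mem_range] at hr
      have hr1 : 1 ≤ r + 1 := by omega
      have hr2 : r + 1 ≤ k := by omega
      obtain ⟨hf1, hf2, hf3⟩ := hfl (r + 1) hr2
      obtain ⟨hg1, hg2, hg3⟩ := hfl r (by omega)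
      obtain ⟨hm1, hm2⟩ := humem (r + 1) hr2
      obtain ⟨hm3, hm4⟩ := humem r (by omega)
      have hcast1 : (a (r + 1) : ℝ) ≤ (n : ℝ) := by exact_mod_cast hf3
      have hcast2 : (a r : ℝ) ≤ (n : ℝ) := by exact_mod_cast hg3
      have h1 : |B (r + 1) (u (r + 1)) - B (r + 1) (((a (r + 1) + 1 : ℕ)) : ℝ)| ≤ O (r + 1) := by
        apply hO_mem (r + 1) hr1 hr2
        · exact Set.mem_Icc.mpr ⟨hm1, by linarith⟩
        · refine Set.mem_Icc.mpr ⟨by positivity, ?_⟩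
          push_cast
          linarith
        · push_cast
          rw [abs_lt]
          constructor <;> linarith
      have h2 : |pS w (r + 1) (a (r + 1) + 1) - B (r + 1) (((a (r + 1) + 1 : ℕ)) : ℝ)| ≤ A (r + 1) :=
        hA_mem (r + 1) (a (r + 1) + 1) (by omega) (by omega)
      have h3 : |pS w (r + 1) (a r) - B (r + 1) ((a r : ℝ))| ≤ A (r + 1) := by
        rcases Nat.eq_zero_or_pos (a r) with h0 | h0
        · rw [h0]
          have hps0 : pS w (r + 1) 0 = 0 := by simp [pS]
          rw [hps0]
          rw [show ((0:ℕ):ℝ) = (0:ℝ) by norm_num, hB0 (r + 1) hr1 hr2]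
          simpa using hA_nonneg (r + 1)
        · exact hA_mem (r + 1) (a r) h0 (by omega)
      have h4 : |B (r + 1) ((a r : ℝ)) - B (r + 1) (u r)| ≤ O (r + 1) := by
        apply hO_mem (r + 1) hr1 hr2
        · exact Set.mem_Icc.mpr ⟨by positivity, by linarith⟩
        · exact Set.mem_Icc.mpr ⟨hm3, by linarith⟩
        · rw [abs_lt]
          constructor <;> linarith
      have ha1 := abs_le.mp h1
      have ha2 := abs_le.mp h2
      have ha3 := abs_le.mp h3
      have ha4 := abs_le.mp h4
      linarith [ha1.1, ha1.2, ha2.1, ha2.2, ha3.1, ha3.2, ha4.1, ha4.2]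
    have hsumle : ∑ r ∈ Finset.range k, (B (r + 1) (u (r + 1)) - B (r + 1) (u r))
        - ∑ r ∈ Finset.range k, (pS w (r + 1) (a (r + 1) + 1) - pS w (r + 1) (a r))
        ≤ ∑ r ∈ Finset.range k, 2 * (A (r + 1) + O (r + 1)) := by
      rw [← Finset.sum_sub_distrib]
      exact Finset.sum_le_sum hterm
    linarith
  have hRHS : 2 * ∑ r ∈ Finset.Icc 1 k, (A r + O r)
      = ∑ r ∈ Finset.range k, 2 * (A (r + 1) + O (r + 1)) := by
    rw [Finset.mul_sum, ← Finset.Ico_add_one_right_eq_Icc, Finset.sum_Ico_eq_sum_range,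
      show k + 1 - 1 = k from rfl]
    apply Finset.sum_congr rfl
    intro i _
    rw [Nat.add_comm 1 i]
  rw [hT, hL, abs_sub_le_iff, hRHS]
  constructor
  · linarith
  · linarith

/-- **Deterministic comparison of discrete and continuous last-passage times.** For any
weights `w i r` and any continuous functions `B r` on `[0, n+1]` vanishing at `0`
(`1 ≤ r ≤ k`), the discrete last-passage time `T(n,k)` and the continuous one `L_B(n,k)`
differ by at most
`2 Σ_{r=1}^k [max_{1 ≤ m ≤ n+1} |S_m^{(r)} - B^{(r)}_m| + sup_{0 ≤ s,t ≤ n+1, |s-t| < 2} |B^{(r)}_s - B^{(r)}_t|]`. -/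
theorem statement3
    (n k : ℕ) (hk : 1 ≤ k) (w : ℕ → ℕ → ℝ) (B : ℕ → ℝ → ℝ)
    (hB0 : ∀ r, 1 ≤ r → r ≤ k → B r 0 = 0)
    (hBcont : ∀ r, 1 ≤ r → r ≤ k → ContinuousOn (B r) (Icc 0 ((n : ℝ) + 1))) :
    |lppT w n k - brownianLPP B n k| ≤
      2 * ∑ r ∈ Finset.Icc 1 k,
        (sSup {y | ∃ m : ℕ, 1 ≤ m ∧ m ≤ n + 1 ∧
            y = |(∑ i ∈ Finset.range m, w i r) - B r m|} +
         sSup {y | ∃ s t : ℝ, s ∈ Icc (0 : ℝ) ((n : ℝ) + 1) ∧ t ∈ Icc (0 : ℝ) ((n : ℝ) + 1) ∧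
            |s - t| < 2 ∧ y = |B r s - B r t|}) :=
  main_thm n k hk w B hB0 hBcont

end
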